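/- arXiv:1101.5982 — 2 statements merged into one kernel-verified Lean document; each statement's English description precedes it below -/
import Mathlib

section
/- Let T be a Tambara functor on a finite group G. For any G-map f : X → Y of finite G-sets, define f_!(x) = f_•(x) - f_•(0), where f_• is the multiplicative transfer. Then f_! is multiplicative: f_!(x)·f_!(y) = f_!(xy) for all x, y in T(X). -/
set_option autoImplicit false

/-! Finite G-sets -/

structure GSet (G : Type) [Group G] : Type 1 where
  carrier : Type
  [mulAction : MulAction G carrier]
  [finite : Finite carrier]

attribute [instance] GSet.mulAction GSet.finite

/-- Equivariant maps of finite `G`-sets. -/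
structure GSetHom {G : Type} [Group G] (X Y : GSet G) : Type where
  toFun : X.carrier → Y.carrier
  map_smul : ∀ (g : G) (x : X.carrier), toFun (g • x) = g • toFun x

namespace GSetHom

variable {G : Type} [Group G]

def id (X : GSet G) : GSetHom X X := ⟨fun x => x, fun _ _ => rfl⟩

def comp {X Y Z : GSet G} (g : GSetHom Y Z) (f : GSetHom X Y) : GSetHom X Z :=
  ⟨fun x => g.toFun (f.toFun x), fun a x => by
    show g.toFun (f.toFun (a • x)) = a • g.toFun (f.toFun x)
    rw [f.map_smul, g.map_smul]⟩

end GSetHom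

namespace GSet

variable {G : Type} [Group G]

/-- Binary disjoint union of `G`-sets. -/
def sum (X Y : GSet G) : GSet G where
  carrier := X.carrier ⊕ Y.carrier

def inl (X Y : GSet G) : GSetHom X (X.sum Y) := ⟨Sum.inl, fun _ _ => rfl⟩

def inr (X Y : GSet G) : GSetHom Y (X.sum Y) := ⟨Sum.inr, fun _ _ => rfl⟩

instance : MulAction G Empty where
  smul _ x := x.elim
  one_smul x := x.elim
  mul_smul _ _ x := x.elim

/-- The empty `G`-set. -/
def empty (G : Type) [Group G] : GSet G where
  carrier := Empty

/-- Finite disjoint unions of `G`-sets. -/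
def sigma {n : ℕ} (Xs : Fin n → GSet G) : GSet G where
  carrier := Σ i, (Xs i).carrier

def sigmaIncl {n : ℕ} (Xs : Fin n → GSet G) (i : Fin n) : GSetHom (Xs i) (sigma Xs) :=
  ⟨fun x => ⟨i, x⟩, fun _ _ => rfl⟩

/-- The canonical pullback of two `G`-maps. -/
def pullback {X Y Z : GSet G} (f : GSetHom X Z) (g : GSetHom Y Z) : GSet G where
  carrier := { q : X.carrier × Y.carrier // f.toFun q.1 = g.toFun q.2 }
  mulAction :=
  { smul := fun a q => ⟨a • q.val, by
      show f.toFun (a • q.val.1) = g.toFun (a • q.val.2)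
      rw [f.map_smul, g.map_smul, q.property]⟩
    one_smul := fun q => Subtype.ext (one_smul G q.val)
    mul_smul := fun a b q => Subtype.ext (mul_smul a b q.val) }

def pbFst {X Y Z : GSet G} (f : GSetHom X Z) (g : GSetHom Y Z) :
    GSetHom (pullback f g) X := ⟨fun q => q.val.1, fun _ _ => rfl⟩

def pbSnd {X Y Z : GSet G} (f : GSetHom X Z) (g : GSetHom Y Z) :
    GSetHom (pullback f g) Y := ⟨fun q => q.val.2, fun _ _ => rfl⟩

/-- The complement of the image of a `G`-map, as a `G`-set. -/
def compl {X Y : GSet G} (f : GSetHom X Y) : GSet G where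
  carrier := { y : Y.carrier // ∀ x, f.toFun x ≠ y }
  mulAction :=
  { smul := fun g y => ⟨g • y.val, fun x h => y.property (g⁻¹ • x) (by
      rw [f.map_smul, h, inv_smul_smul])⟩
    one_smul := fun y => Subtype.ext (one_smul G y.val)
    mul_smul := fun a b y => Subtype.ext (mul_smul a b y.val) }

def complIncl {X Y : GSet G} (f : GSetHom X Y) : GSetHom (compl f) Y :=
  ⟨fun y => y.val, fun _ _ => rfl⟩

/-- Points of Tambara's dependent product `Π_f(A)`: pairs `(y, σ)` of a point `y : Y`
and a section `σ` of `p` on the fiber `f⁻¹(y)` (encoded as an `Option`-valued function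
supported exactly on the fiber). -/
def PiProp {X Y A : GSet G} (f : GSetHom X Y) (p : GSetHom A X)
    (s : Y.carrier × (X.carrier → Option A.carrier)) : Prop :=
  (∀ x, (s.2 x).isSome = true ↔ f.toFun x = s.1) ∧
  (∀ x a, s.2 x = some a → p.toFun a = x)

def PiCar {X Y A : GSet G} (f : GSetHom X Y) (p : GSetHom A X) : Type :=
  { s : Y.carrier × (X.carrier → Option A.carrier) // PiProp f p s }

instance optionFinite {α : Type} [Finite α] : Finite (Option α) :=
  Finite.of_equiv _ (Equiv.optionEquivSumPUnit.{0,0} α).symm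

instance piFinite {X Y A : GSet G} (f : GSetHom X Y) (p : GSetHom A X) :
    Finite (PiCar f p) := by
  unfold PiCar; infer_instance

def piSmul {X Y A : GSet G} (f : GSetHom X Y) (p : GSetHom A X) (g : G)
    (s : PiCar f p) : PiCar f p :=
  ⟨(g • s.val.1, fun x => (s.val.2 (g⁻¹ • x)).map (g • ·)), by
    constructor
    · intro x
      rw [Option.isSome_map, s.property.1 (g⁻¹ • x), f.map_smul]
      constructor
      · intro h; rw [← h, smul_inv_smul]
      · intro h; rw [h, inv_smul_smul]
    · intro x a ha
      rcases Option.map_eq_some_iff.mp ha with ⟨b, hb, rfl⟩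
      rw [p.map_smul, s.property.2 _ _ hb, smul_inv_smul]⟩

instance piAction {X Y A : GSet G} (f : GSetHom X Y) (p : GSetHom A X) :
    MulAction G (PiCar f p) where
  smul := piSmul f p
  one_smul s := by
    apply Subtype.ext
    refine Prod.ext (one_smul G s.val.1) ?_
    funext x
    show (s.val.2 ((1:G)⁻¹ • x)).map ((1:G) • ·) = s.val.2 x
    rw [inv_one, one_smul]
    cases h : s.val.2 x <;> simp [one_smul]
  mul_smul a b s := by
    apply Subtype.ext
    refine Prod.ext (mul_smul a b s.val.1) ?_
    funext x
    show (s.val.2 ((a * b)⁻¹ • x)).map ((a * b) • ·)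
        = ((s.val.2 (b⁻¹ • (a⁻¹ • x))).map (b • ·)).map (a • ·)
    rw [Option.map_map, mul_inv_rev, mul_smul]
    cases h : s.val.2 (b⁻¹ • a⁻¹ • x) <;> simp [mul_smul, Function.comp]

/-- Tambara's dependent product `Π_f(A)` as a `G`-set. -/
def piObj {X Y A : GSet G} (f : GSetHom X Y) (p : GSetHom A X) : GSet G where
  carrier := PiCar f p

/-- The projection `π : Π_f(A) → Y`. -/
def piPr {X Y A : GSet G} (f : GSetHom X Y) (p : GSetHom A X) :
    GSetHom (piObj f p) Y := ⟨fun s => s.val.1, fun _ _ => rfl⟩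

theorem optGet {α : Type} {o : Option α} {a : α} (h : o = some a) :
    ∀ hs : o.isSome = true, o.get hs = a := by subst h; intro _; rfl

/-- The evaluation map `λ : X ×_Y Π_f(A) → A`, `(x, (y, σ)) ↦ σ(x)`. -/
def piEval {X Y A : GSet G} (f : GSetHom X Y) (p : GSetHom A X) :
    GSetHom (pullback f (piPr f p)) A where
  toFun z := (z.val.2.val.2 z.val.1).get (by
    rw [z.val.2.property.1 z.val.1]; exact z.property)
  map_smul g z := by
    have hs : (z.val.2.val.2 z.val.1).isSome = true := by
      rw [z.val.2.property.1 z.val.1]; exact z.property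
    obtain ⟨a, ha⟩ := Option.isSome_iff_exists.mp hs
    have h1 : z.val.2.val.2 z.val.1 = some a := ha
    have h2 : (g • z).val.2.val.2 (g • z).val.1 = some (g • a) := by
      show (z.val.2.val.2 (g⁻¹ • (g • z.val.1))).map (g • ·) = some (g • a)
      rw [inv_smul_smul, h1]; rfl
    simp only [optGet h2, optGet h1]

end GSet

namespace GSet

/-- A transitive (nonempty) finite `G`-set. -/
def IsTransitive {G : Type} [Group G] (X : GSet G) : Prop :=
  Nonempty X.carrier ∧ MulAction.IsPretransitive G X.carrier

end GSet

/-! Tambara functors -/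

/-- The underlying system of commutative rings of a Tambara functor. -/
structure TamData (G : Type) [Group G] : Type 1 where
  obj : GSet G → Type
  ring : ∀ X, CommRing (obj X)

attribute [instance] TamData.ring

/-- A Tambara functor on the finite group `G`: a system of commutative rings `obj X`
indexed by finite `G`-sets, together with restrictions `res`, additive transfers `tr`
and multiplicative transfers `nm`, functorial, additive, satisfying the Mackey
base-change conditions, the projection formula, and Tambara's distributive law. -/
structure TambaraFunctor (G : Type) [Group G] extends TamData G where
  res : ∀ {X Y : GSet G}, GSetHom X Y → (obj Y →+* obj X)
  tr : ∀ {X Y : GSet G}, GSetHom X Y → (obj X →+ obj Y)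
  nm : ∀ {X Y : GSet G}, GSetHom X Y → (obj X →* obj Y)
  res_id : ∀ {X : GSet G} (x : obj X), res (GSetHom.id X) x = x
  res_comp : ∀ {X Y Z : GSet G} (f : GSetHom X Y) (g : GSetHom Y Z) (z : obj Z),
    res f (res g z) = res (g.comp f) z
  tr_id : ∀ {X : GSet G} (x : obj X), tr (GSetHom.id X) x = x
  tr_comp : ∀ {X Y Z : GSet G} (f : GSetHom X Y) (g : GSetHom Y Z) (x : obj X),
    tr g (tr f x) = tr (g.comp f) x
  nm_id : ∀ {X : GSet G} (x : obj X), nm (GSetHom.id X) x = x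
  nm_comp : ∀ {X Y Z : GSet G} (f : GSetHom X Y) (g : GSetHom Y Z) (x : obj X),
    nm g (nm f x) = nm (g.comp f) x
  /-- additivity on binary disjoint unions -/
  add_bij : ∀ X Y : GSet G, Function.Bijective
    (fun t : obj (X.sum Y) => (res (GSet.inl X Y) t, res (GSet.inr X Y) t))
  /-- `T(∅)` is the zero ring -/
  empty_subsingleton : ∀ x y : obj (GSet.empty G), x = y
  /-- Mackey base change for the additive transfer -/
  tr_bc : ∀ {X Y Z : GSet G} (f : GSetHom X Z) (g : GSetHom Y Z) (x : obj X),
    res g (tr f x) = tr (GSet.pbSnd f g) (res (GSet.pbFst f g) x)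
  /-- Mackey base change for the multiplicative transfer -/
  nm_bc : ∀ {X Y Z : GSet G} (f : GSetHom X Z) (g : GSetHom Y Z) (x : obj X),
    res g (nm f x) = nm (GSet.pbSnd f g) (res (GSet.pbFst f g) x)
  /-- the projection formula -/
  proj_formula : ∀ {X Y : GSet G} (f : GSetHom X Y) (a : obj X) (b : obj Y),
    tr f (a * res f b) = tr f a * b
  /-- the norm of zero is the additive transfer of `1` from the complement of the image -/
  nm_zero : ∀ {X Y : GSet G} (f : GSetHom X Y), nm f (0 : obj X) = tr (GSet.complIncl f) 1
  /-- Tambara's distributive law, via the canonical exponential diagram on `Π_f(A)` -/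
  distrib : ∀ {X Y A : GSet G} (f : GSetHom X Y) (p : GSetHom A X) (a : obj A),
    nm f (tr p a) = tr (GSet.piPr f p)
      (nm (GSet.pbSnd f (GSet.piPr f p)) (res (GSet.piEval f p) a))

namespace TambaraFunctor

variable {G : Type} [Group G]

/-- `f_!(x) = f_•(x) - f_•(0)`. -/
def shriek (T : TambaraFunctor G) {X Y : GSet G} (f : GSetHom X Y) (x : T.obj X) :
    T.obj Y := T.nm f x - T.nm f 0

end TambaraFunctor

/-- A morphism of Tambara functors: a family of ring homomorphisms natural with respect
to restrictions, additive transfers and multiplicative transfers. -/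
structure TamHom {G : Type} [Group G] (T S : TambaraFunctor G) where
  app : ∀ X : GSet G, T.obj X →+* S.obj X
  app_res : ∀ {X Y : GSet G} (f : GSetHom X Y) (y : T.obj Y),
    app X (T.res f y) = S.res f (app Y y)
  app_tr : ∀ {X Y : GSet G} (f : GSetHom X Y) (x : T.obj X),
    app Y (T.tr f x) = S.tr f (app X x)
  app_nm : ∀ {X Y : GSet G} (f : GSetHom X Y) (x : T.obj X),
    app Y (T.nm f x) = S.nm f (app X x)

namespace TambaraFunctor

variable {G : Type} [Group G]

/-- An ideal of a Tambara functor: a family of ideals closed under restrictions,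
additive transfers, and satisfying `f_•(𝔦(X)) ⊆ f_•(0) + 𝔦(Y)`
(equivalently, closed under `f_!`). -/
structure IsIdeal (T : TambaraFunctor G) (I : ∀ X : GSet G, Ideal (T.obj X)) : Prop where
  res_mem : ∀ {X Y : GSet G} (f : GSetHom X Y) {y : T.obj Y}, y ∈ I Y → T.res f y ∈ I X
  tr_mem : ∀ {X Y : GSet G} (f : GSetHom X Y) {x : T.obj X}, x ∈ I X → T.tr f x ∈ I Y
  shriek_mem : ∀ {X Y : GSet G} (f : GSetHom X Y) {x : T.obj X},
    x ∈ I X → T.shriek f x ∈ I Y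

/-- The ideal generated by a family of subsets: the intersection of all ideals
containing it. -/
def gen (T : TambaraFunctor G) (S : ∀ X : GSet G, Set (T.obj X)) (X : GSet G) :
    Ideal (T.obj X) :=
  ⨅ (I : ∀ Y : GSet G, Ideal (T.obj Y)) (_ : T.IsIdeal I) (_ : ∀ Y, S Y ⊆ ↑(I Y)), I X

/-- The family of subsets consisting of the single element `a ∈ T(A)`. -/
def single (T : TambaraFunctor G) (A : GSet G) (a : T.obj A) (X : GSet G) :
    Set (T.obj X) := { x | ∃ h : A = X, h ▸ a = x }

/-- The principal ideal `⟨a⟩` generated by `a ∈ T(A)`. -/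
def principal (T : TambaraFunctor G) (A : GSet G) (a : T.obj A) :
    ∀ X : GSet G, Ideal (T.obj X) := T.gen (T.single A a)

/-- The defining set of the product of two ideals. -/
def mulSet (T : TambaraFunctor G) (I J : ∀ X : GSet G, Ideal (T.obj X)) (X : GSet G) :
    Set (T.obj X) :=
  { x | ∃ (A : GSet G) (p : GSetHom A X) (a b : T.obj A),
      a ∈ I A ∧ b ∈ J A ∧ x = T.tr p (a * b) }

/-- The product of two ideals of a Tambara functor. -/
def mulIdl (T : TambaraFunctor G) (I J : ∀ X : GSet G, Ideal (T.obj X)) (X : GSet G) :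
    Ideal (T.obj X) := Ideal.span (T.mulSet I J X)

/-- Iterated products of ideals. -/
def mulMulti (T : TambaraFunctor G) :
    List (∀ X : GSet G, Ideal (T.obj X)) → ∀ X : GSet G, Ideal (T.obj X)
  | [] => fun _ => ⊤
  | I :: ls => T.mulIdl I (T.mulMulti ls)

/-- A prime ideal of a Tambara functor. -/
structure IsPrime (T : TambaraFunctor G) (P : ∀ X : GSet G, Ideal (T.obj X)) : Prop where
  isIdeal : T.IsIdeal P
  ne_top : ∃ X : GSet G, P X ≠ ⊤
  mem_or_mem : ∀ {X Y : GSet G}, X.IsTransitive → Y.IsTransitive →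
    ∀ {a : T.obj X} {b : T.obj Y},
      (∀ Z : GSet G, T.mulIdl (T.principal X a) (T.principal Y b) Z ≤ P Z) →
      a ∈ P X ∨ b ∈ P Y

/-- A maximal ideal of a Tambara functor. -/
structure IsMaximal (T : TambaraFunctor G) (M : ∀ X : GSet G, Ideal (T.obj X)) : Prop where
  isIdeal : T.IsIdeal M
  ne_top : ∃ X : GSet G, M X ≠ ⊤
  eq_of_le : ∀ K : ∀ X : GSet G, Ideal (T.obj X), T.IsIdeal K →
    (∀ X, M X ≤ K X) → (K = M ∨ ∀ X, K X = ⊤)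

end TambaraFunctor

namespace GSet

/-- The `G`-set `G/e`, i.e. `G` with the left regular action. -/
def regular (G : Type) [Group G] [Finite G] : GSet G where
  carrier := G

/-- Right multiplication `G/e → G/e`, an equivariant map. -/
def rightMul {G : Type} [Group G] [Finite G] (g : G) :
    GSetHom (regular G) (regular G) :=
  ⟨fun x => (id x : G) * g, fun a x => mul_assoc a x g⟩

end GSet


/-! Over the complement `c : Y ∖ f(X) → Y` of the image of `f`, every norm `f_•(z)` restricts to
`1`, because the base change of `f` along `c` has empty source and `T(∅) = 0`. By the projection
formula, `e := f_•(0) = c_+(1)` therefore satisfies `e · f_•(z) = e` for all `z`, in particular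
`e² = e`; expanding `(f_•(x) - e)(f_•(y) - e)` with these identities gives `f_•(xy) - e`. -/

namespace GSetHom

variable {G : Type} [Group G]

@[ext]
theorem ext {X Y : GSet G} {f g : GSetHom X Y} (h : f.toFun = g.toFun) : f = g := by
  cases f; cases g; cases h; rfl

end GSetHom

namespace GSet

variable {G : Type} [Group G]

instance isEmpty_pullback_complIncl {X Y : GSet G} (f : GSetHom X Y) :
    IsEmpty (pullback f (complIncl f)).carrier :=
  ⟨fun q => q.val.2.property q.val.1 q.property⟩

def toEmpty (P : GSet G) [IsEmpty P.carrier] : GSetHom P (empty G) :=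
  ⟨isEmptyElim, fun _ q => isEmptyElim q⟩

def fromEmpty (P : GSet G) : GSetHom (empty G) P :=
  ⟨Empty.elim, fun _ q => q.elim⟩

theorem fromEmpty_comp_toEmpty (P : GSet G) [IsEmpty P.carrier] :
    (fromEmpty P).comp (toEmpty P) = GSetHom.id P :=
  GSetHom.ext (funext isEmptyElim)

end GSet

namespace TambaraFunctor

variable {G : Type} [Group G] (T : TambaraFunctor G)

theorem subsingleton_obj_of_isEmpty (P : GSet G) [IsEmpty P.carrier] :
    Subsingleton (T.obj P) := by
  have retract : ∀ a : T.obj P,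
      T.res (GSet.toEmpty P) (T.res (GSet.fromEmpty P) a) = a := fun a => by
    rw [T.res_comp, GSet.fromEmpty_comp_toEmpty, T.res_id]
  refine ⟨fun a b => ?_⟩
  rw [← retract a, ← retract b, T.empty_subsingleton (T.res _ a)]

theorem res_complIncl_nm {X Y : GSet G} (f : GSetHom X Y) (z : T.obj X) :
    T.res (GSet.complIncl f) (T.nm f z) = 1 := by
  have := T.subsingleton_obj_of_isEmpty (GSet.pullback f (GSet.complIncl f))
  rw [T.nm_bc, Subsingleton.elim (T.res _ z) 1, map_one]

theorem nm_zero_mul {X Y : GSet G} (f : GSetHom X Y) (z : T.obj X) :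
    T.nm f 0 * T.nm f z = T.nm f 0 := by
  have projection := T.proj_formula (GSet.complIncl f) 1 (T.nm f z)
  rw [T.res_complIncl_nm, mul_one, ← T.nm_zero] at projection
  exact projection.symm

end TambaraFunctor

theorem shriek_mul_general (G : Type) [Group G] (T : TambaraFunctor G)
    {X Y : GSet G} (f : GSetHom X Y) (x y : T.obj X) :
    T.shriek f x * T.shriek f y = T.shriek f (x * y) := by
  unfold TambaraFunctor.shriek
  rw [map_mul]
  linear_combination
    T.nm_zero_mul f 0 - T.nm_zero_mul f x - T.nm_zero_mul f y

/-- `f_!` is multiplicative: `f_!(x)·f_!(y) = f_!(xy)`. -/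
theorem shriek_mul (G : Type) [Group G] [Finite G] (T : TambaraFunctor G)
    {X Y : GSet G} (f : GSetHom X Y) (x y : T.obj X) :
    T.shriek f x * T.shriek f y = T.shriek f (x * y) :=
  shriek_mul_general G T f x y
end

section
/- Let φ : T → S be a morphism of Tambara functors on a finite group G. Then Im φ, given by (Im φ)(X) = Im(φ_X), is a Tambara subfunctor of S, and there is a natural isomorphism of Tambara functors T/Ker φ ≅ Im φ compatible with φ and the projection T → T/Ker φ. -/
set_option autoImplicit false

/-! The image `Im φ ⊆ S` is closed under restrictions and both transfers because `φ` commutes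
with them. It is a Tambara functor in its own right: every axiom is an identity in `S`, except
surjectivity in the additivity axiom, which is lifted from `T`. Corestricting `φ` to `Im φ`
gives a levelwise surjection with kernel `Ker φ`, i.e. `T/Ker φ ≅ Im φ`. -/

namespace TambaraFunctor

variable {G : Type} [Group G]

structure IsSubfunctor (S : TambaraFunctor G) (R : ∀ X : GSet G, Subring (S.obj X)) :
    Prop where
  res_mem : ∀ {X Y : GSet G} (f : GSetHom X Y) {y : S.obj Y}, y ∈ R Y → S.res f y ∈ R X
  tr_mem : ∀ {X Y : GSet G} (f : GSetHom X Y) {x : S.obj X}, x ∈ R X → S.tr f x ∈ R Y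
  nm_mem : ∀ {X Y : GSet G} (f : GSetHom X Y) {x : S.obj X}, x ∈ R X → S.nm f x ∈ R Y
  exists_res_inl_res_inr : ∀ {X Y : GSet G} {a : S.obj X} {b : S.obj Y}, a ∈ R X → b ∈ R Y →
    ∃ t ∈ R (X.sum Y), S.res (GSet.inl X Y) t = a ∧ S.res (GSet.inr X Y) t = b

variable {S : TambaraFunctor G} {R : ∀ X : GSet G, Subring (S.obj X)}

def subfunctor (hR : S.IsSubfunctor R) : TambaraFunctor G where
  obj X := R X
  ring _ := inferInstance
  res f := RingHom.codRestrict ((S.res f).comp (R _).subtype) _ fun y => hR.res_mem f y.2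
  tr f :=
    { toFun := fun x => ⟨S.tr f x, hR.tr_mem f x.2⟩
      map_zero' := Subtype.ext (map_zero _)
      map_add' := fun _ _ => Subtype.ext (map_add _ _ _) }
  nm f :=
    { toFun := fun x => ⟨S.nm f x, hR.nm_mem f x.2⟩
      map_one' := Subtype.ext (map_one _)
      map_mul' := fun _ _ => Subtype.ext (map_mul _ _ _) }
  res_id x := Subtype.ext (S.res_id x.1)
  res_comp f g z := Subtype.ext (S.res_comp f g z.1)
  tr_id x := Subtype.ext (S.tr_id x.1)
  tr_comp f g x := Subtype.ext (S.tr_comp f g x.1)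
  nm_id x := Subtype.ext (S.nm_id x.1)
  nm_comp f g x := Subtype.ext (S.nm_comp f g x.1)
  add_bij X Y := by
    refine ⟨fun a b hab => Subtype.ext ((S.add_bij X Y).1 ?_), fun ⟨a, b⟩ => ?_⟩
    · exact Prod.ext (congrArg (fun p => p.1.1) hab) (congrArg (fun p => p.2.1) hab)
    · obtain ⟨t, ht, hta, htb⟩ := hR.exists_res_inl_res_inr a.2 b.2
      exact ⟨⟨t, ht⟩, Prod.ext (Subtype.ext hta) (Subtype.ext htb)⟩
  empty_subsingleton x y := Subtype.ext (S.empty_subsingleton x.1 y.1)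
  tr_bc f g x := Subtype.ext (S.tr_bc f g x.1)
  nm_bc f g x := Subtype.ext (S.nm_bc f g x.1)
  proj_formula f a b := Subtype.ext (S.proj_formula f a.1 b.1)
  nm_zero f := Subtype.ext (S.nm_zero f)
  distrib f p a := Subtype.ext (S.distrib f p a.1)

def subfunctorIncl (hR : S.IsSubfunctor R) : TamHom (subfunctor hR) S where
  app X := (R X).subtype
  app_res _ _ := rfl
  app_tr _ _ := rfl
  app_nm _ _ := rfl

theorem subfunctorIncl_injective (hR : S.IsSubfunctor R) (X : GSet G) :
    Function.Injective ((subfunctorIncl hR).app X) :=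
  Subtype.val_injective

theorem range_subfunctorIncl (hR : S.IsSubfunctor R) (X : GSet G) :
    Set.range ((subfunctorIncl hR).app X) = R X :=
  Subtype.range_coe

end TambaraFunctor

namespace TamHom

open TambaraFunctor

variable {G : Type} [Group G] {T S : TambaraFunctor G} (phi : TamHom T S)

theorem res_mem_range {X Y : GSet G} (f : GSetHom X Y) {y : S.obj Y}
    (hy : y ∈ (phi.app Y).range) : S.res f y ∈ (phi.app X).range := by
  obtain ⟨t, rfl⟩ := hy
  exact ⟨T.res f t, phi.app_res f t⟩

theorem tr_mem_range {X Y : GSet G} (f : GSetHom X Y) {x : S.obj X}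
    (hx : x ∈ (phi.app X).range) : S.tr f x ∈ (phi.app Y).range := by
  obtain ⟨t, rfl⟩ := hx
  exact ⟨T.tr f t, phi.app_tr f t⟩

theorem nm_mem_range {X Y : GSet G} (f : GSetHom X Y) {x : S.obj X}
    (hx : x ∈ (phi.app X).range) : S.nm f x ∈ (phi.app Y).range := by
  obtain ⟨t, rfl⟩ := hx
  exact ⟨T.nm f t, phi.app_nm f t⟩

theorem exists_res_inl_res_inr_mem_range {X Y : GSet G} {a : S.obj X} {b : S.obj Y}
    (ha : a ∈ (phi.app X).range) (hb : b ∈ (phi.app Y).range) :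
    ∃ t ∈ (phi.app (X.sum Y)).range,
      S.res (GSet.inl X Y) t = a ∧ S.res (GSet.inr X Y) t = b := by
  obtain ⟨u, rfl⟩ := ha
  obtain ⟨v, rfl⟩ := hb
  obtain ⟨t, ht⟩ := (T.add_bij X Y).2 (u, v)
  refine ⟨phi.app _ t, ⟨t, rfl⟩, ?_, ?_⟩
  · rw [← phi.app_res, show T.res (GSet.inl X Y) t = u from congrArg Prod.fst ht]
  · rw [← phi.app_res, show T.res (GSet.inr X Y) t = v from congrArg Prod.snd ht]

theorem isSubfunctor_range : S.IsSubfunctor fun X => (phi.app X).range :=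
  ⟨phi.res_mem_range, phi.tr_mem_range, phi.nm_mem_range,
    phi.exists_res_inl_res_inr_mem_range⟩

def range : TambaraFunctor G := subfunctor phi.isSubfunctor_range

def rangeRestrict : TamHom T phi.range where
  app X := (phi.app X).rangeRestrict
  app_res f y := Subtype.ext (phi.app_res f y)
  app_tr f x := Subtype.ext (phi.app_tr f x)
  app_nm f x := Subtype.ext (phi.app_nm f x)

theorem rangeRestrict_surjective (X : GSet G) :
    Function.Surjective (phi.rangeRestrict.app X) :=
  (phi.app X).rangeRestrict_surjective

theorem subfunctorIncl_rangeRestrict (X : GSet G) (x : T.obj X) :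
    (subfunctorIncl phi.isSubfunctor_range).app X (phi.rangeRestrict.app X x) = phi.app X x :=
  rfl

theorem rangeRestrict_eq_zero_iff {X : GSet G} {x : T.obj X} :
    phi.rangeRestrict.app X x = 0 ↔ phi.app X x = 0 :=
  Subtype.ext_iff

end TamHom

/-- The subfunctor `Im φ` and the isomorphism `T/Ker φ ≅ Im φ` are encoded by a Tambara
functor `Q` with a levelwise surjective morphism `q : T → Q` with kernel `Ker φ` and a
levelwise injective morphism `ι : Q → S` with image `Im φ`, such that `ι ∘ q = φ`. -/
theorem image_subfunctor_and_first_isomorphism_general (G : Type) [Group G]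
    (T S : TambaraFunctor G) (phi : TamHom T S) :
    (∀ {X Y : GSet G} (f : GSetHom X Y),
      (∀ y ∈ Set.range (phi.app Y), S.res f y ∈ Set.range (phi.app X)) ∧
      (∀ x ∈ Set.range (phi.app X), S.tr f x ∈ Set.range (phi.app Y)) ∧
      (∀ x ∈ Set.range (phi.app X), S.nm f x ∈ Set.range (phi.app Y))) ∧
    ∃ (Q : TambaraFunctor G) (q : TamHom T Q) (iota : TamHom Q S),
      (∀ X : GSet G, Function.Surjective (q.app X)) ∧
      (∀ X : GSet G, Function.Injective (iota.app X)) ∧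
      (∀ X : GSet G, Set.range (iota.app X) = Set.range (phi.app X)) ∧
      (∀ (X : GSet G) (x : T.obj X), iota.app X (q.app X x) = phi.app X x) ∧
      (∀ (X : GSet G) (x : T.obj X), q.app X x = 0 ↔ phi.app X x = 0) :=
  ⟨fun f => ⟨fun _ => phi.res_mem_range f, fun _ => phi.tr_mem_range f,
      fun _ => phi.nm_mem_range f⟩,
    phi.range, phi.rangeRestrict, TambaraFunctor.subfunctorIncl phi.isSubfunctor_range,
    phi.rangeRestrict_surjective, TambaraFunctor.subfunctorIncl_injective _,
    fun X => (TambaraFunctor.range_subfunctorIncl _ X).trans (phi.app X).coe_range,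
    phi.subfunctorIncl_rangeRestrict, fun _ _ => phi.rangeRestrict_eq_zero_iff⟩

/-- the image of a morphism of Tambara functors is a Tambara subfunctor,
and `T/Ker φ ≅ Im φ` compatibly with `φ` and the projection. Here the subfunctor and the
isomorphism are encoded by a Tambara functor `Q` with a levelwise surjective morphism
`q : T → Q` with kernel `Ker φ` and a levelwise injective morphism `ι : Q → S` with image
`Im φ`, such that `ι ∘ q = φ`. -/
theorem image_subfunctor_and_first_isomorphism (G : Type) [Group G] [Finite G]
    (T S : TambaraFunctor G) (phi : TamHom T S) :
    (∀ {X Y : GSet G} (f : GSetHom X Y),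
      (∀ y ∈ Set.range (phi.app Y), S.res f y ∈ Set.range (phi.app X)) ∧
      (∀ x ∈ Set.range (phi.app X), S.tr f x ∈ Set.range (phi.app Y)) ∧
      (∀ x ∈ Set.range (phi.app X), S.nm f x ∈ Set.range (phi.app Y))) ∧
    ∃ (Q : TambaraFunctor G) (q : TamHom T Q) (iota : TamHom Q S),
      (∀ X : GSet G, Function.Surjective (q.app X)) ∧
      (∀ X : GSet G, Function.Injective (iota.app X)) ∧
      (∀ X : GSet G, Set.range (iota.app X) = Set.range (phi.app X)) ∧
      (∀ (X : GSet G) (x : T.obj X), iota.app X (q.app X x) = phi.app X x) ∧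
      (∀ (X : GSet G) (x : T.obj X), q.app X x = 0 ↔ phi.app X x = 0) :=
  image_subfunctor_and_first_isomorphism_general G T S phi
end
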